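/- arXiv:1606.01496 — 5 statements merged into one kernel-verified Lean document; each statement's English description precedes it below -/
import Mathlib

section
/- Let G be a locally finite simple graph and x a vertex. If x satisfies CD(K₂, N₂), then for any 0 < N₁ ≤ N₂, x satisfies CD(K₂ - 2d_x(1/N₁ - 1/N₂), N₁). In particular, the curvature function satisfies K_{G,x}(N₂) ≤ K_{G,x}(N₁) + 2d_x(1/N₁ - 1/N₂). -/
open Finset Filter Topology ENNReal SimpleGraph

noncomputable instance (priority := low) finLocFin {V : Type*} [Finite V] (G : SimpleGraph V) :
    G.LocallyFinite := fun _ => Fintype.ofFinite _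

/-- Non-normalized graph Laplacian. -/
noncomputable def lap {V : Type*} (G : SimpleGraph V) [G.LocallyFinite] (f : V → ℝ) (x : V) : ℝ :=
  ∑ y ∈ G.neighborFinset x, (f y - f x)

/-- Bakry–Émery Γ operator. -/
noncomputable def gam {V : Type*} (G : SimpleGraph V) [G.LocallyFinite] (f g : V → ℝ) (x : V) : ℝ :=
  (lap G (fun v => f v * g v) x - f x * lap G g x - g x * lap G f x) / 2

/-- Bakry–Émery Γ₂ operator. -/
noncomputable def gam2 {V : Type*} (G : SimpleGraph V) [G.LocallyFinite] (f g : V → ℝ) (x : V) : ℝ :=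
  (lap G (gam G f g) x - gam G f (lap G g) x - gam G (lap G f) g x) / 2

/-- The coefficient 1/N for N ∈ (0,∞], with 1/∞ = 0. -/
noncomputable def invN (N : ℝ≥0∞) : ℝ := (N⁻¹).toReal

/-- The vertex `x` satisfies the curvature-dimension inequality CD(K,N). -/
def CD {V : Type*} (G : SimpleGraph V) [G.LocallyFinite] (K : ℝ) (N : ℝ≥0∞) (x : V) : Prop :=
  ∀ f : V → ℝ, gam2 G f f x ≥ invN N * (lap G f x) ^ 2 + K * gam G f f x


lemma gam_eq {V : Type*} (G : SimpleGraph V) [G.LocallyFinite] (f : V → ℝ) (x : V) :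
    gam G f f x = (∑ y ∈ G.neighborFinset x, (f y - f x) ^ 2) / 2 := by
  unfold gam lap
  simp only [Finset.mul_sum, ← Finset.sum_sub_distrib]
  congr 1
  apply Finset.sum_congr rfl
  intro y _
  ring

lemma gam_nonneg {V : Type*} (G : SimpleGraph V) [G.LocallyFinite] (f : V → ℝ) (x : V) :
    0 ≤ gam G f f x := by
  rw [gam_eq]
  positivity

lemma sq_lap_le {V : Type*} (G : SimpleGraph V) [G.LocallyFinite] (f : V → ℝ) (x : V) :
    (lap G f x) ^ 2 ≤ 2 * (G.degree x : ℝ) * gam G f f x := by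
  rw [gam_eq, SimpleGraph.degree]
  have h := sq_sum_le_card_mul_sum_sq (s := G.neighborFinset x) (f := fun y => f y - f x)
  unfold lap
  calc (∑ y ∈ G.neighborFinset x, (f y - f x)) ^ 2
      ≤ (#(G.neighborFinset x) : ℝ) * ∑ y ∈ G.neighborFinset x, (f y - f x) ^ 2 := h
    _ = 2 * (#(G.neighborFinset x) : ℝ) * ((∑ y ∈ G.neighborFinset x, (f y - f x) ^ 2) / 2) := by
        ring

theorem stmt_2 {V : Type*} (G : SimpleGraph V) [G.LocallyFinite] (x : V)
    (N₁ N₂ : ℝ≥0∞) (hN₁ : 0 < N₁) (h12 : N₁ ≤ N₂) :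
    (∀ K₂ : ℝ, CD G K₂ N₂ x →
      CD G (K₂ - 2 * (G.degree x : ℝ) * (invN N₁ - invN N₂)) N₁ x) ∧
    (∀ k₁ k₂ : ℝ, IsGreatest {K : ℝ | CD G K N₁ x} k₁ →
      IsGreatest {K : ℝ | CD G K N₂ x} k₂ →
      k₂ ≤ k₁ + 2 * (G.degree x : ℝ) * (invN N₁ - invN N₂)) := by
  have hinv : invN N₂ ≤ invN N₁ := by
    apply ENNReal.toReal_mono
    · simpa [ENNReal.inv_ne_top] using hN₁.ne'
    · exact ENNReal.inv_le_inv.mpr h12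
  have key : ∀ K₂ : ℝ, CD G K₂ N₂ x →
      CD G (K₂ - 2 * (G.degree x : ℝ) * (invN N₁ - invN N₂)) N₁ x := by
    intro K₂ hK f
    have h1 := hK f
    have h2 := sq_lap_le G f x
    have h3 := gam_nonneg G f x
    have h4 : (invN N₁ - invN N₂) * (lap G f x) ^ 2 ≤
        (invN N₁ - invN N₂) * (2 * (G.degree x : ℝ) * gam G f f x) :=
      mul_le_mul_of_nonneg_left h2 (by linarith)
    nlinarith [h1, h4]
  refine ⟨key, fun k₁ k₂ h₁ h₂ => ?_⟩
  have := h₁.2 (key k₂ h₂.1)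
  linarith
end

section
/- For a locally finite simple graph G and vertex x, the curvature function K_{G,x} is concave: for N₁ < N₂ in (0,∞), α ∈ [0,1], and N = αN₁ + (1-α)N₂, one has K_{G,x}(N) ≥ α K_{G,x}(N₁) + (1-α) K_{G,x}(N₂). -/
open Finset Filter Topology ENNReal SimpleGraph

theorem stmt_4 {V : Type*} (G : SimpleGraph V) [G.LocallyFinite] (x : V)
    (N₁ N₂ α : ℝ) (hN₁ : 0 < N₁) (h12 : N₁ < N₂) (hα : α ∈ Set.Icc (0:ℝ) 1)
    (k₁ k₂ k : ℝ)
    (hg₁ : IsGreatest {K : ℝ | CD G K (ENNReal.ofReal N₁) x} k₁)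
    (hg₂ : IsGreatest {K : ℝ | CD G K (ENNReal.ofReal N₂) x} k₂)
    (hg : IsGreatest {K : ℝ | CD G K (ENNReal.ofReal (α * N₁ + (1 - α) * N₂)) x} k) :
    k ≥ α * k₁ + (1 - α) * k₂ := by
  obtain ⟨hα0, hα1⟩ := hα
  have hN₂ : 0 < N₂ := hN₁.trans h12
  have hN : 0 < α * N₁ + (1 - α) * N₂ := by nlinarith
  have einv : ∀ M : ℝ, 0 < M → invN (ENNReal.ofReal M) = M⁻¹ := by
    intro M hM
    rw [invN, ← ENNReal.ofReal_inv_of_pos hM, ENNReal.toReal_ofReal (by positivity)]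
  have hconv : (α * N₁ + (1 - α) * N₂)⁻¹ ≤ α * N₁⁻¹ + (1 - α) * N₂⁻¹ := by
    rw [inv_le_iff_one_le_mul₀ hN]
    have h1 : N₁ * N₁⁻¹ = 1 := mul_inv_cancel₀ hN₁.ne'
    have h2 : N₂ * N₂⁻¹ = 1 := mul_inv_cancel₀ hN₂.ne'
    have h3 : 0 < N₁⁻¹ := by positivity
    have h4 : 0 < N₂⁻¹ := by positivity
    have hab : (N₁⁻¹ * N₂) * (N₂⁻¹ * N₁) = 1 := by field_simp
    have ha2b : (N₁⁻¹ * N₂) ^ 2 * (N₂⁻¹ * N₁) = N₁⁻¹ * N₂ := by field_simp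
    have hb : 0 < N₂⁻¹ * N₁ := mul_pos h4 hN₁
    have key : 2 ≤ N₁⁻¹ * N₂ + N₂⁻¹ * N₁ := by
      nlinarith [mul_nonneg (sq_nonneg (N₁⁻¹ * N₂ - 1)) hb.le, hab, ha2b]
    have hαα : 0 ≤ α * (1 - α) := mul_nonneg hα0 (sub_nonneg.2 hα1)
    nlinarith [mul_le_mul_of_nonneg_left key hαα, h1, h2]
  have hmem : CD G (α * k₁ + (1 - α) * k₂) (ENNReal.ofReal (α * N₁ + (1 - α) * N₂)) x := by
    intro f
    have h1 := hg₁.1 f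
    have h2 := hg₂.1 f
    rw [einv _ hN₁] at h1
    rw [einv _ hN₂] at h2
    rw [ge_iff_le, einv _ hN]
    have hsq : (0:ℝ) ≤ (lap G f x) ^ 2 := sq_nonneg _
    nlinarith [mul_le_mul_of_nonneg_left h1 hα0,
      mul_le_mul_of_nonneg_left h2 (sub_nonneg.2 hα1),
      mul_le_mul_of_nonneg_right hconv hsq]
  exact hg.2 hmem
end

section
/- Let G be a locally finite simple graph and x a vertex satisfying CD(0,N) for some N ∈ (0,∞). Then N ≥ 4d_x/(d_x+3). -/
/-!
Test the curvature-dimension inequality against the indicator function `δ` of `x`. Everything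
needed is determined by the 1-ball and 2-ball around `x`: with `d = d_x`, one finds `Δδ(x) = -d`
and `Γ₂(δ,δ)(x) = d(d+3)/4`, so CD(0,N) reads `d²/N ≤ d(d+3)/4`.
-/

open Finset Filter Topology ENNReal SimpleGraph

section BakryEmery

variable {V : Type*} (G : SimpleGraph V) [G.LocallyFinite]

lemma lap_eq_of_forall_adj {f : V → ℝ} {x : V} {c : ℝ} (hf : ∀ y, G.Adj x y → f y = c) :
    lap G f x = G.degree x * (c - f x) := by
  rw [lap, ← card_neighborFinset_eq_degree, ← nsmul_eq_mul, ← sum_const]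
  exact sum_congr rfl fun y hy => by rw [hf y ((G.mem_neighborFinset x y).1 hy)]

lemma gam_eq_of_forall_adj {f g : V → ℝ} {x : V} {a b : ℝ} (hf : ∀ y, G.Adj x y → f y = a)
    (hg : ∀ y, G.Adj x y → g y = b) :
    gam G f g x = G.degree x * (a - f x) * (b - g x) / 2 := by
  have hfg : ∀ y, G.Adj x y → f y * g y = a * b := fun y hy => by rw [hf y hy, hg y hy]
  rw [gam, lap_eq_of_forall_adj G hfg, lap_eq_of_forall_adj G hf, lap_eq_of_forall_adj G hg]
  ring

lemma gam_comm (f g : V → ℝ) : gam G f g = gam G g f := by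
  funext x
  simp only [gam, mul_comm (f _) (g _)]
  ring

lemma gam2_self (f : V → ℝ) (x : V) :
    gam2 G f f x = lap G (gam G f f) x / 2 - gam G f (lap G f) x := by
  rw [gam2, gam_comm G (lap G f)]
  ring

end BakryEmery

lemma invN_ofReal {N : ℝ} (hN : 0 ≤ N) : invN (ENNReal.ofReal N) = N⁻¹ := by
  rw [invN, ENNReal.toReal_inv, ENNReal.toReal_ofReal hN]

section Indicator

variable {V : Type*} [DecidableEq V] (G : SimpleGraph V) [G.LocallyFinite] (x : V)

local notation "δ" => (Pi.single x 1 : V → ℝ)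

lemma lap_single_self : lap G δ x = -G.degree x := by
  rw [lap_eq_of_forall_adj G fun y hy => Pi.single_eq_of_ne hy.ne' 1, Pi.single_eq_same]
  ring

lemma lap_single_of_adj {y : V} (hy : G.Adj x y) : lap G δ y = 1 := by
  rw [lap, sum_sub_distrib, sum_pi_single', if_pos ((G.mem_neighborFinset y x).2 hy.symm),
    Pi.single_eq_of_ne hy.ne' 1, sum_const_zero, sub_zero]

lemma gam_single_of_adj {y : V} (hy : G.Adj x y) : gam G δ δ y = 1 / 2 := by
  have hsq : (fun v => δ v * δ v) = δ := by
    funext v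
    by_cases hv : v = x <;> simp [hv]
  rw [gam, hsq, lap_single_of_adj G x hy, Pi.single_eq_of_ne hy.ne' 1]
  ring

lemma gam2_single_self :
    gam2 G δ δ x = G.degree x * (G.degree x + 3) / 4 := by
  have hδ : ∀ y, G.Adj x y → δ y = 0 := fun y hy => Pi.single_eq_of_ne hy.ne' 1
  have hΓ : gam G δ δ x = G.degree x / 2 := by
    rw [gam_eq_of_forall_adj G hδ hδ, Pi.single_eq_same]
    ring
  have hΔΓ : lap G (gam G δ δ) x = G.degree x * (1 / 2 - G.degree x / 2) := by
    rw [lap_eq_of_forall_adj G fun y hy => gam_single_of_adj G x hy, hΓ]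
  have hΓΔ : gam G δ (lap G δ) x = -(G.degree x * (1 + G.degree x)) / 2 := by
    rw [gam_eq_of_forall_adj G hδ fun y hy => lap_single_of_adj G x hy, lap_single_self,
      Pi.single_eq_same]
    ring
  rw [gam2_self, hΔΓ, hΓΔ]
  ring

end Indicator

theorem stmt_6 {V : Type*} (G : SimpleGraph V) [G.LocallyFinite] (x : V)
    (N : ℝ) (hN : 0 < N) (h : CD G 0 (ENNReal.ofReal N) x) :
    4 * (G.degree x : ℝ) / ((G.degree x : ℝ) + 3) ≤ N := by
  classical
  have hCD := h (Pi.single x 1)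
  rw [gam2_single_self, lap_single_self, invN_ofReal hN.le, zero_mul, add_zero] at hCD
  set d : ℝ := (G.degree x : ℝ)
  have hd : 0 ≤ d := Nat.cast_nonneg _
  have hdN : d * d ≤ d * (N * (d + 3) / 4) := by
    have := mul_le_mul_of_nonneg_left hCD hN.le
    rw [← mul_assoc, mul_inv_cancel₀ hN.ne', one_mul, neg_sq] at this
    linarith
  rw [div_le_iff₀ (by positivity)]
  rcases hd.eq_or_lt with hd0 | hdpos
  · rw [← hd0]
    linarith
  · linarith [le_of_mul_le_mul_left hdN hdpos]
end

section
/- Let G be a locally finite simple graph satisfying CD(0,N) for some N ∈ (0,4). Then every vertex degree satisfies d_x ≤ 3N/(4-N). -/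
open Finset Filter Topology ENNReal SimpleGraph

namespace SimpleGraph

variable {V : Type*} (G : SimpleGraph V) [G.LocallyFinite]

lemma sum_neighborFinset_of_forall_eq {F : V → ℝ} {x : V} {c : ℝ}
    (hF : ∀ y ∈ G.neighborFinset x, F y = c) :
    ∑ y ∈ G.neighborFinset x, F y = G.degree x * c := by
  rw [sum_congr rfl hF, sum_const, card_neighborFinset_eq_degree, nsmul_eq_mul]

lemma lap_of_forall_neighbor_eq {f : V → ℝ} {x : V} {c : ℝ}
    (hf : ∀ y ∈ G.neighborFinset x, f y = c) :
    lap G f x = G.degree x * (c - f x) :=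
  G.sum_neighborFinset_of_forall_eq fun y hy => by rw [hf y hy]

lemma gam_eq_sum (f g : V → ℝ) (x : V) :
    gam G f g x = (∑ y ∈ G.neighborFinset x, (f y - f x) * (g y - g x)) / 2 := by
  simp only [gam, lap, mul_sum, ← sum_sub_distrib]
  congr 1
  exact sum_congr rfl fun _ _ => by ring

lemma gam_comm (f g : V → ℝ) : gam G f g = gam G g f := by
  funext x
  simp only [gam_eq_sum, mul_comm]

lemma gam2_self (f : V → ℝ) (x : V) :
    gam2 G f f x = lap G (gam G f f) x / 2 - gam G f (lap G f) x := by
  rw [gam2, gam_comm G (lap G f) f]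
  ring

section Indicator

variable [DecidableEq V] (x : V)

lemma single_of_mem_neighborFinset ⦃y : V⦄ (hy : y ∈ G.neighborFinset x) :
    (Pi.single x 1 : V → ℝ) y = 0 :=
  Pi.single_eq_of_ne ((G.mem_neighborFinset x y).1 hy).ne' 1

lemma lap_single_self : lap G (Pi.single x 1) x = -G.degree x := by
  rw [G.lap_of_forall_neighbor_eq (G.single_of_mem_neighborFinset x), Pi.single_eq_same]
  ring

lemma lap_single_of_mem_neighborFinset ⦃y : V⦄ (hy : y ∈ G.neighborFinset x) :
    lap G (Pi.single x 1) y = 1 := by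
  have hxy : x ∈ G.neighborFinset y := by simpa [adj_comm] using hy
  rw [lap, sum_sub_distrib, sum_pi_single', if_pos hxy, G.single_of_mem_neighborFinset x hy,
    sum_const_zero, sub_zero]

lemma gam_single_self : gam G (Pi.single x 1) (Pi.single x 1) x = G.degree x / 2 := by
  rw [gam_eq_sum, G.sum_neighborFinset_of_forall_eq (c := 1) fun y hy => by
    rw [G.single_of_mem_neighborFinset x hy, Pi.single_eq_same]; ring]
  ring

lemma gam_single_of_mem_neighborFinset ⦃y : V⦄ (hy : y ∈ G.neighborFinset x) :
    gam G (Pi.single x 1) (Pi.single x 1) y = 1 / 2 := by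
  have hidem :
      (fun v => (Pi.single x 1 : V → ℝ) v * (Pi.single x 1 : V → ℝ) v) = Pi.single x 1 := by
    funext v
    rcases eq_or_ne v x with rfl | hv <;> simp [*]
  rw [gam, hidem, G.lap_single_of_mem_neighborFinset x hy, G.single_of_mem_neighborFinset x hy]
  ring

lemma gam_single_lap_single_self :
    gam G (Pi.single x 1) (lap G (Pi.single x 1)) x = -(G.degree x * (1 + G.degree x)) / 2 := by
  rw [gam_eq_sum, G.sum_neighborFinset_of_forall_eq (c := -(1 + G.degree x)) fun y hy => by
    rw [G.single_of_mem_neighborFinset x hy, G.lap_single_of_mem_neighborFinset x hy,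
      Pi.single_eq_same, lap_single_self]
    ring]
  ring

lemma gam2_single_self :
    gam2 G (Pi.single x 1) (Pi.single x 1) x = (G.degree x ^ 2 + 3 * G.degree x) / 4 := by
  rw [gam2_self, gam_single_lap_single_self, G.lap_of_forall_neighbor_eq (c := 1 / 2)
    (G.gam_single_of_mem_neighborFinset x), gam_single_self]
  ring

end Indicator

lemma degree_le_of_CD_zero {N : ℝ} (hN : 0 < N) (hN4 : N < 4) {x : V}
    (hx : CD G 0 (ENNReal.ofReal N) x) : (G.degree x : ℝ) ≤ 3 * N / (4 - N) := by
  classical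
  have key := hx (Pi.single x 1)
  rw [gam2_single_self, lap_single_self, invN_ofReal hN.le, zero_mul, add_zero, neg_sq] at key
  rw [ge_iff_le, inv_mul_le_iff₀ hN] at key
  rw [le_div_iff₀ (by linarith)]
  nlinarith [(G.degree x).cast_nonneg (α := ℝ)]

end SimpleGraph

theorem stmt_8 {V : Type*} (G : SimpleGraph V) [G.LocallyFinite]
    (N : ℝ) (hN : 0 < N) (hN4 : N < 4)
    (h : ∀ x : V, CD G 0 (ENNReal.ofReal N) x) :
    ∀ x : V, (G.degree x : ℝ) ≤ 3 * N / (4 - N) :=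
  fun x => G.degree_le_of_CD_zero hN hN4 (h x)
end

section
/- Let C_n be the cycle graph on n ≥ 5 vertices and x any vertex. Then K_{C_n,x}(N) = 2 - 4/N for 0 < N ≤ 2, and K_{C_n,x}(N) = 0 for N > 2. -/
open Finset Filter Topology ENNReal SimpleGraph

/-!
On a cycle, with `a = f (x - 1) - f x` and `b = f (x + 1) - f x`, one has `Δf x = a + b`,
`Γ f x = (a² + b²) / 2` and `Γ₂ f x = (Δf x)² / 2 + (Δf (x - 1))² / 4 + (Δf (x + 1))² / 4`.
When `n ≥ 5` the vertices `x - 2, …, x + 2` are distinct, so `f` can be chosen harmonic at `x ± 1`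
with arbitrary `a, b`. Hence CD(K,N) at `x` says exactly `K (a² + b²) ≤ (1 - 2/N) (a + b)²`,
and testing `a = b` and `a = -b` shows the best constant is `min (2 - 4/N) 0`.
-/

open Fin.CommRing

lemma Fin.sub_one_ne_add_one {n : ℕ} (x : Fin (n + 3)) : x - 1 ≠ x + 1 := by
  simp only [ne_eq, sub_eq_iff_eq_add, add_assoc x, left_eq_add]
  exact ne_of_beq_false rfl

section CycleGraph

variable {n : ℕ} [(cycleGraph (n + 3)).LocallyFinite]

lemma lap_cycleGraph (f : Fin (n + 3) → ℝ) (x : Fin (n + 3)) :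
    lap (cycleGraph (n + 3)) f x = f (x - 1) + f (x + 1) - 2 * f x := by
  have hnbr : (cycleGraph (n + 3)).neighborFinset x = {x - 1, x + 1} := by
    ext w
    rw [mem_neighborFinset, ← mem_neighborSet, cycleGraph_neighborSet]
    simp
  rw [lap, hnbr, sum_pair (Fin.sub_one_ne_add_one x)]
  ring

lemma gam_cycleGraph (f g : Fin (n + 3) → ℝ) (x : Fin (n + 3)) :
    gam (cycleGraph (n + 3)) f g x =
      ((f (x - 1) - f x) * (g (x - 1) - g x) + (f (x + 1) - f x) * (g (x + 1) - g x)) / 2 := by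
  simp only [gam, lap_cycleGraph]
  ring

lemma gam2_cycleGraph (f : Fin (n + 3) → ℝ) (x : Fin (n + 3)) :
    gam2 (cycleGraph (n + 3)) f f x =
      lap (cycleGraph (n + 3)) f x ^ 2 / 2 + lap (cycleGraph (n + 3)) f (x - 1) ^ 2 / 4 +
        lap (cycleGraph (n + 3)) f (x + 1) ^ 2 / 4 := by
  simp only [gam2, gam_cycleGraph, lap_cycleGraph, sub_add_cancel, add_sub_cancel_right]
  ring

end CycleGraph

lemma Fin.exists_fun_eq_on_five_consecutive {n : ℕ} (x : Fin (n + 5)) (y₀ y₁ y₂ y₃ y₄ : ℝ) :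
    ∃ f : Fin (n + 5) → ℝ,
      f (x - 1 - 1) = y₀ ∧ f (x - 1) = y₁ ∧ f x = y₂ ∧ f (x + 1) = y₃ ∧ f (x + 1 + 1) = y₄ := by
  refine ⟨fun v => [y₀, y₁, y₂, y₃, y₄].getD (v - (x - 1 - 1)).val 0, ?_⟩
  have h₁ : x - 1 - (x - 1 - 1) = 1 := by ring
  have h₂ : x - (x - 1 - 1) = 2 := by ring
  have h₃ : x + 1 - (x - 1 - 1) = 3 := by ring
  have h₄ : x + 1 + 1 - (x - 1 - 1) = 4 := by ring
  simp only [sub_self, h₁, h₂, h₃, h₄]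
  simp [Nat.mod_eq_of_lt]

lemma exists_lap_cycleGraph_neighbors_eq_zero {n : ℕ} [(cycleGraph (n + 5)).LocallyFinite]
    (x : Fin (n + 5)) (a b : ℝ) :
    ∃ f : Fin (n + 5) → ℝ, f (x - 1) - f x = a ∧ f (x + 1) - f x = b ∧
      lap (cycleGraph (n + 5)) f (x - 1) = 0 ∧ lap (cycleGraph (n + 5)) f (x + 1) = 0 := by
  obtain ⟨f, h₀, h₁, h₂, h₃, h₄⟩ := Fin.exists_fun_eq_on_five_consecutive x (2 * a) a 0 b (2 * b)
  refine ⟨f, ?_, ?_, ?_, ?_⟩ <;>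
    simp only [lap_cycleGraph, sub_add_cancel, add_sub_cancel_right, h₀, h₁, h₂, h₃, h₄] <;> ring

lemma cd_cycleGraph_iff {n : ℕ} [(cycleGraph (n + 5)).LocallyFinite] (x : Fin (n + 5)) (K : ℝ)
    (N : ℝ≥0∞) :
    CD (cycleGraph (n + 5)) K N x ↔
      ∀ a b : ℝ, K * (a ^ 2 + b ^ 2) ≤ (1 - 2 * invN N) * (a + b) ^ 2 := by
  constructor
  · intro hcd a b
    obtain ⟨f, ha, hb, hl, hr⟩ := exists_lap_cycleGraph_neighbors_eq_zero x a b
    have hf := hcd f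
    rw [gam2_cycleGraph, hl, hr, gam_cycleGraph, lap_cycleGraph f x, ha, hb,
      show f (x - 1) + f (x + 1) - 2 * f x = a + b by linarith] at hf
    linarith
  · intro hq f
    rw [gam2_cycleGraph, gam_cycleGraph, lap_cycleGraph f x]
    nlinarith [hq (f (x - 1) - f x) (f (x + 1) - f x),
      sq_nonneg (lap (cycleGraph (n + 5)) f (x - 1)),
      sq_nonneg (lap (cycleGraph (n + 5)) f (x + 1))]

lemma isGreatest_mul_sq_add_sq_le_mul_add_sq (c : ℝ) :
    IsGreatest {K : ℝ | ∀ a b : ℝ, K * (a ^ 2 + b ^ 2) ≤ c * (a + b) ^ 2} (min (2 * c) 0) := by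
  refine ⟨fun a b => ?_, fun K hK => le_min ?_ ?_⟩
  · rcases le_total c 0 with hc | hc
    · rw [min_eq_left (by linarith)]
      nlinarith [mul_nonpos_of_nonpos_of_nonneg hc (sq_nonneg (a - b))]
    · rw [min_eq_right (by linarith), zero_mul]
      positivity
  · linarith [hK 1 1]
  · linarith [hK 1 (-1)]

lemma inv_two_le_invN {N : ℝ≥0∞} (h0 : 0 < N) (h2 : N ≤ 2) : 2⁻¹ ≤ invN N := by
  simpa [invN] using
    ENNReal.toReal_mono (ENNReal.inv_ne_top.mpr h0.ne') (ENNReal.inv_le_inv.mpr h2)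

lemma invN_le_inv_two {N : ℝ≥0∞} (h2 : 2 ≤ N) : invN N ≤ 2⁻¹ := by
  simpa [invN] using ENNReal.toReal_mono (by simp) (ENNReal.inv_le_inv.mpr h2)

theorem stmt_14 (n : ℕ) (hn : 5 ≤ n) (x : Fin n)
    (KF : ℝ≥0∞ → ℝ)
    (hKF : ∀ N : ℝ≥0∞, 0 < N →
      IsGreatest {K : ℝ | CD (SimpleGraph.cycleGraph n) K N x} (KF N)) :
    (∀ N : ℝ≥0∞, 0 < N → N ≤ 2 → KF N = 2 - 4 * invN N) ∧
    (∀ N : ℝ≥0∞, 2 < N → KF N = 0) := by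
  obtain ⟨m, rfl⟩ : ∃ m, n = m + 5 := ⟨n - 5, by omega⟩
  have hKF_eq : ∀ N, 0 < N → KF N = min (2 * (1 - 2 * invN N)) 0 := fun N hN =>
    (hKF N hN).unique <| by
      simpa only [cd_cycleGraph_iff] using isGreatest_mul_sq_add_sq_le_mul_add_sq (1 - 2 * invN N)
  refine ⟨fun N hN0 hN2 => ?_, fun N hN2 => ?_⟩
  · rw [hKF_eq N hN0, min_eq_left (by linarith [inv_two_le_invN hN0 hN2])]
    ring
  · rw [hKF_eq N (lt_trans two_pos hN2), min_eq_right (by linarith [invN_le_inv_two hN2.le])]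
end
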